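/- Let q_1, q_2 be real numbers with 1 < q_1 < 2 < q_2 and q_1 q_2 ((q_2 − 2) + q_2(q_1 − 2)) > 1, and set a = q_1 − 2, s_2 = (q_2 − 2) + q_2(q_1 − 2), s_1 = a + min(0, q_1 s_2 − 1). Let φ_1^{(0)}, φ_2^{(0)} ∈ C² and φ_1^{(1)}, φ_2^{(1)} ∈ C¹ be radial functions on ℝ³ supported in {|x| < 1}, and let ψ_i : [0,∞) × [0,∞) → ℝ be C² solutions of the 1+1-dimensional wave equation ∂_t²ψ_i = ∂_r²ψ_i with ψ_i(t, 0) = 0, ψ_i(0, r) = r·φ_i^{(0)}(r) and ∂_tψ_i(0, r) = r·φ_i^{(1)}(r). Then ‖(ψ_1, ψ_2)‖_X ≤ C · ( ‖φ_1^{(0)}‖_{W^{2,∞}} + ‖φ_2^{(0)}‖_{W^{2,∞}} + ‖φ_1^{(1)}‖_{W^{1,∞}} + ‖φ_2^{(1)}‖_{W^{1,∞}} ) for a constant C depending only on q_1, q_2. -/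

import Mathlib

/-!
With `∂_u = ∂_t - ∂_r` the wave equation reads `∂_u ∂_v ψ = 0`: `∂_v ψ` is constant along
ingoing rays, `∂_u ψ` along outgoing ones, and the Dirichlet condition turns `∂_u ψ` into `-∂_v ψ`
at `r = 0`. Radial data are even, so `r φ` is odd and the profile `W = r φ⁽¹⁾ + (r φ⁽⁰⁾)'` is one
function on `ℝ` with `∂_v ψ = W (t + r)` and `∂_u ψ = -W (t - r)`. It is supported in `[-1, 1]`,
and `W`, `W'` are bounded by the data norms. Hence `ψ` and `∂_t ψ` vanish off the strip
`|t - r| ≤ 1`, where `⟨u⟩ ≤ 2`, and `∂_v ψ` vanishes for `t + r > 1`. On the strip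
`⟨v⟩ ^ (1 + a) ≤ ⟨v⟩ ≤ 3/2 + r` because `1 + a ≤ 1`, while `∂_t ψ` and `ψ` are `O(min(1, r))`,
so their quotients by `r` stay bounded against these weights.
-/

open Real Set MeasureTheory

noncomputable section

/-- Three-dimensional Euclidean space. -/
abbrev E3 : Type := EuclideanSpace ℝ (Fin 3)

/-- A function on `ℝ³` is radial (spherically symmetric) if it depends only on `|x|`. -/
def Radial (f : E3 → ℝ) : Prop := ∀ x y : E3, ‖x‖ = ‖y‖ → f x = f y

/-- Radial representative: value of `f` at the point at distance `r` on the first axis. -/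
def radRep (f : E3 → ℝ) : ℝ → ℝ := fun r => f (r • EuclideanSpace.single (0 : Fin 3) (1 : ℝ))

/-- `W^{2,∞}` norm: sup of the function and of its first and second Fréchet derivatives. -/
def W2inf (f : E3 → ℝ) : ℝ :=
  (⨆ x : E3, |f x|) + (⨆ x : E3, ‖fderiv ℝ f x‖) + (⨆ x : E3, ‖fderiv ℝ (fderiv ℝ f) x‖)

/-- `W^{1,∞}` norm: sup of the function and of its first Fréchet derivative. -/
def W1inf (f : E3 → ℝ) : ℝ :=
  (⨆ x : E3, |f x|) + (⨆ x : E3, ‖fderiv ℝ f x‖)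

/-- Partial derivative in time of a function of `(t, r)`. -/
def pdt (ψ : ℝ → ℝ → ℝ) : ℝ → ℝ → ℝ := fun t r => deriv (fun s => ψ s r) t

/-- Partial derivative in the radial variable of a function of `(t, r)`. -/
def pdr (ψ : ℝ → ℝ → ℝ) : ℝ → ℝ → ℝ := fun t r => deriv (fun ρ => ψ t ρ) r

/-- Outgoing null derivative `∂_v = ∂_t + ∂_r`. -/
def pdv (ψ : ℝ → ℝ → ℝ) : ℝ → ℝ → ℝ := fun t r => pdt ψ t r + pdr ψ t r

/-- Japanese bracket `⟨x⟩ = (1 + x²)^{1/2}`. -/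
def jap (x : ℝ) : ℝ := Real.sqrt (1 + x ^ 2)

/-- The weighted sup-norm `X` for the Glassey–Strauss system. -/
def Xnorm (a s1 s2 : ℝ) (ψ1 ψ2 : ℝ → ℝ → ℝ) : ℝ :=
  (⨆ p : {p : ℝ × ℝ // 0 ≤ p.1 ∧ 0 ≤ p.2},
      |pdt ψ1 p.1.1 p.1.2 / p.1.2| * jap ((p.1.1 + p.1.2) / 2) ^ (1 + a)
        * jap ((p.1.1 - p.1.2) / 2) ^ (s1 + 1 - a)) +
  (⨆ p : {p : ℝ × ℝ // 0 ≤ p.1 ∧ 0 ≤ p.2},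
      |ψ2 p.1.1 p.1.2 / p.1.2| * jap ((p.1.1 + p.1.2) / 2)
        * jap ((p.1.1 - p.1.2) / 2) ^ s2) +
  (⨆ p : {p : ℝ × ℝ // 0 ≤ p.1 ∧ 0 ≤ p.2},
      |pdv ψ2 p.1.1 p.1.2| * jap ((p.1.1 + p.1.2) / 2) ^ (s2 + 1))

open Filter Topology Function

lemma jap_nonneg (x : ℝ) : 0 ≤ jap x :=
  Real.sqrt_nonneg _

lemma one_le_jap (x : ℝ) : 1 ≤ jap x :=
  Real.one_le_sqrt.2 (by nlinarith [sq_nonneg x])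

lemma jap_le_one_add_abs (x : ℝ) : jap x ≤ 1 + |x| :=
  Real.sqrt_le_iff.2 ⟨by positivity, by nlinarith [abs_nonneg x, sq_abs x]⟩

lemma jap_rpow_le_one_add_abs {e : ℝ} (he : e ≤ 1) (x : ℝ) : jap x ^ e ≤ 1 + |x| :=
  calc jap x ^ e ≤ jap x ^ (1 : ℝ) := Real.rpow_le_rpow_of_exponent_le (one_le_jap x) he
    _ = jap x := Real.rpow_one _
    _ ≤ 1 + |x| := jap_le_one_add_abs x

lemma jap_rpow_le_two_rpow_abs {x : ℝ} (hx : |x| ≤ 1) (e : ℝ) : jap x ^ e ≤ 2 ^ |e| :=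
  calc jap x ^ e ≤ jap x ^ |e| := Real.rpow_le_rpow_of_exponent_le (one_le_jap x) (le_abs_self e)
    _ ≤ 2 ^ |e| := Real.rpow_le_rpow (zero_le_one.trans (one_le_jap x))
        (by linarith [jap_le_one_add_abs x]) (abs_nonneg e)

lemma abs_sub_le_abs_add {t r : ℝ} (ht : 0 ≤ t) (hr : 0 ≤ r) : |t - r| ≤ |t + r| := by
  rw [abs_of_nonneg (add_nonneg ht hr), abs_sub_le_iff]
  constructor <;> linarith

lemma abs_div_mul_add_le {g r c L M : ℝ} (hr : 0 ≤ r) (hc : 0 ≤ c) (hL : 0 ≤ L)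
    (hgL : |g| ≤ L * r) (hgM : |g| ≤ M) : |g / r| * (c + r) ≤ c * L + M := by
  rcases hr.eq_or_lt with rfl | hr
  · rw [div_zero, abs_zero, zero_mul]
    nlinarith [abs_nonneg g]
  · rw [abs_div, abs_of_pos hr, div_mul_eq_mul_div, div_le_iff₀ hr]
    nlinarith [mul_le_mul_of_nonneg_left hgL hc, mul_le_mul_of_nonneg_right hgM hr.le]

lemma abs_div_mul_jap_rpow_le {g t r e e' L M : ℝ} (hr : 0 ≤ r) (he' : e' ≤ 1) (hL : 0 ≤ L)
    (hgL : |g| ≤ L * r) (hgM : |g| ≤ M) (hg : 1 < |t - r| → g = 0) :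
    |g / r| * jap ((t + r) / 2) ^ e' * jap ((t - r) / 2) ^ e ≤ 2 ^ |e| * (3 / 2 * L + M) := by
  have hM : 0 ≤ 3 / 2 * L + M := by linarith [abs_nonneg g]
  by_cases hcone : 1 < |t - r|
  · rw [hg hcone, zero_div, abs_zero, zero_mul, zero_mul]
    positivity
  rw [not_lt, abs_le] at hcone
  have hu : jap ((t - r) / 2) ^ e ≤ 2 ^ |e| :=
    jap_rpow_le_two_rpow_abs (by rw [abs_le]; constructor <;> linarith) e
  have hv : jap ((t + r) / 2) ^ e' ≤ 3 / 2 + r := by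
    have : |(t + r) / 2| ≤ 1 / 2 + r := by rw [abs_le]; constructor <;> linarith
    linarith [jap_rpow_le_one_add_abs he' ((t + r) / 2)]
  calc |g / r| * jap ((t + r) / 2) ^ e' * jap ((t - r) / 2) ^ e
      ≤ |g / r| * (3 / 2 + r) * 2 ^ |e| :=
        mul_le_mul (mul_le_mul_of_nonneg_left hv (abs_nonneg _)) hu
          (Real.rpow_nonneg (jap_nonneg _) _)
          (mul_nonneg (abs_nonneg _) (by linarith))
    _ = 2 ^ |e| * (|g / r| * (3 / 2 + r)) := by ring
    _ ≤ 2 ^ |e| * (3 / 2 * L + M) :=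
        mul_le_mul_of_nonneg_left (abs_div_mul_add_le hr (by norm_num) hL hgL hgM) (by positivity)

lemma abs_mul_jap_rpow_le {h t r e M : ℝ} (ht : 0 ≤ t) (hr : 0 ≤ r) (hM : |h| ≤ M)
    (hh : 1 < t + r → h = 0) : |h| * jap ((t + r) / 2) ^ e ≤ 2 ^ |e| * M := by
  by_cases hcone : 1 < t + r
  · rw [hh hcone, abs_zero, zero_mul]
    exact mul_nonneg (by positivity) ((abs_nonneg h).trans hM)
  have hv : jap ((t + r) / 2) ^ e ≤ 2 ^ |e| :=
    jap_rpow_le_two_rpow_abs (by rw [abs_le]; constructor <;> linarith) e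
  rw [mul_comm (2 ^ |e|)]
  exact mul_le_mul hM hv (Real.rpow_nonneg (jap_nonneg _) _) ((abs_nonneg h).trans hM)

section Calculus

lemma abs_sub_le_of_abs_deriv_le {f : ℝ → ℝ} {a b C : ℝ} (hf : Differentiable ℝ f) (hab : a ≤ b)
    (h : ∀ x ∈ Icc a b, |deriv f x| ≤ C) : |f b - f a| ≤ C * (b - a) := by
  have := (convex_Icc a b).norm_image_sub_le_of_norm_deriv_le (fun x _ => hf x) h
    (left_mem_Icc.2 hab) (right_mem_Icc.2 hab)
  rwa [Real.norm_eq_abs, Real.norm_eq_abs, abs_of_nonneg (sub_nonneg.2 hab)] at this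

lemma eq_of_deriv_eq_zero_on_Icc {f : ℝ → ℝ} {a b : ℝ} (hf : Differentiable ℝ f) (hab : a ≤ b)
    (h : ∀ x ∈ Icc a b, deriv f x = 0) : f b = f a := by
  have := abs_sub_le_of_abs_deriv_le hf hab (C := 0) fun x hx => by rw [h x hx, abs_zero]
  rwa [zero_mul, abs_nonpos_iff, sub_eq_zero] at this

lemma deriv_eq_of_eqOn_Ici {f g : ℝ → ℝ} {x : ℝ} (hf : DifferentiableAt ℝ f x)
    (hg : DifferentiableAt ℝ g x) (hfg : EqOn f g (Ici x)) : deriv f x = deriv g x :=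
  (uniqueDiffWithinAt_Ici x).eq_deriv _ hf.hasDerivAt.hasDerivWithinAt
    (hg.hasDerivAt.hasDerivWithinAt.congr_of_mem (fun _ hy => hfg hy) (Set.mem_Ici.2 le_rfl))

lemma deriv_eq_zero_of_lt_abs {f : ℝ → ℝ} {c x : ℝ} (hf : ∀ y, c < |y| → f y = 0)
    (hx : c < |x|) : deriv f x = 0 := by
  have : f =ᶠ[𝓝 x] fun _ => 0 := by
    filter_upwards [(isOpen_lt continuous_const continuous_abs).mem_nhds hx] with y hy
      using hf y hy
  rw [this.deriv_eq, deriv_const]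

variable {E : Type*} [NormedAddCommGroup E] [NormedSpace ℝ E]

lemma hasDerivAt_fderiv_apply_comp {Φ : E → ℝ} {c : ℝ → E} {v : E} {s : ℝ}
    (hΦ : DifferentiableAt ℝ (fderiv ℝ Φ) (c s)) (hc : HasDerivAt c v s) (w : E) :
    HasDerivAt (fun s => fderiv ℝ Φ (c s) w) (fderiv ℝ (fderiv ℝ Φ) (c s) v w) s := by
  simpa using (hΦ.hasFDerivAt.comp_hasDerivAt s hc).clm_apply (hasDerivAt_const s w)

lemma fderiv_apply_add_eq {Φ : E → ℝ} (hΦ : Differentiable ℝ (fderiv ℝ Φ)) {p d v : E}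
    (h : ∀ s ∈ Icc (0 : ℝ) 1, fderiv ℝ (fderiv ℝ Φ) (p + s • d) d v = 0) :
    fderiv ℝ Φ (p + d) v = fderiv ℝ Φ p v := by
  have hline : ∀ s : ℝ, HasDerivAt (fun s : ℝ => fderiv ℝ Φ (p + s • d) v)
      (fderiv ℝ (fderiv ℝ Φ) (p + s • d) d v) s := fun s => by
    simpa using
      hasDerivAt_fderiv_apply_comp (hΦ _) (((hasDerivAt_id' s).smul_const d).const_add p) v
  simpa using eq_of_deriv_eq_zero_on_Icc (fun s => (hline s).differentiableAt) zero_le_one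
    fun s hs => (hline s).deriv.trans (h s hs)

end Calculus

section PartialDerivatives

variable {ψ : ℝ → ℝ → ℝ}

lemma pdt_eq_fderiv (hψ : Differentiable ℝ (uncurry ψ)) (t r : ℝ) :
    pdt ψ t r = fderiv ℝ (uncurry ψ) (t, r) (1, 0) :=
  ((hψ _).hasFDerivAt.comp_hasDerivAt t ((hasDerivAt_id t).prodMk (hasDerivAt_const t r))).deriv

lemma pdr_eq_fderiv (hψ : Differentiable ℝ (uncurry ψ)) (t r : ℝ) :
    pdr ψ t r = fderiv ℝ (uncurry ψ) (t, r) (0, 1) :=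
  ((hψ _).hasFDerivAt.comp_hasDerivAt r ((hasDerivAt_const r t).prodMk (hasDerivAt_id r))).deriv

lemma pdv_eq_fderiv (hψ : Differentiable ℝ (uncurry ψ)) (t r : ℝ) :
    pdv ψ t r = fderiv ℝ (uncurry ψ) (t, r) (1, 1) := by
  rw [pdv, pdt_eq_fderiv hψ, pdr_eq_fderiv hψ, ← map_add, Prod.mk_add_mk, add_zero, zero_add]

lemma pdt_sub_pdr_eq_fderiv (hψ : Differentiable ℝ (uncurry ψ)) (t r : ℝ) :
    pdt ψ t r - pdr ψ t r = fderiv ℝ (uncurry ψ) (t, r) (1, -1) := by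
  rw [pdt_eq_fderiv hψ, pdr_eq_fderiv hψ, ← map_sub, Prod.mk_sub_mk, sub_zero, zero_sub]

lemma pdt_pdt_eq_fderiv_fderiv (hψ : Differentiable ℝ (uncurry ψ))
    (hψ' : Differentiable ℝ (fderiv ℝ (uncurry ψ))) (t r : ℝ) :
    pdt (pdt ψ) t r = fderiv ℝ (fderiv ℝ (uncurry ψ)) (t, r) (1, 0) (1, 0) := by
  rw [show pdt ψ = fun t r => fderiv ℝ (uncurry ψ) (t, r) (1, 0) from
    funext fun t => funext fun r => pdt_eq_fderiv hψ t r]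
  exact (hasDerivAt_fderiv_apply_comp (hψ' _)
    ((hasDerivAt_id t).prodMk (hasDerivAt_const t r)) _).deriv

lemma pdr_pdr_eq_fderiv_fderiv (hψ : Differentiable ℝ (uncurry ψ))
    (hψ' : Differentiable ℝ (fderiv ℝ (uncurry ψ))) (t r : ℝ) :
    pdr (pdr ψ) t r = fderiv ℝ (fderiv ℝ (uncurry ψ)) (t, r) (0, 1) (0, 1) := by
  rw [show pdr ψ = fun t r => fderiv ℝ (uncurry ψ) (t, r) (0, 1) from
    funext fun t => funext fun r => pdr_eq_fderiv hψ t r]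
  exact (hasDerivAt_fderiv_apply_comp (hψ' _)
    ((hasDerivAt_const r t).prodMk (hasDerivAt_id r)) _).deriv

end PartialDerivatives

structure IsDirichletWave (ψ : ℝ → ℝ → ℝ) : Prop where
  contDiff : ContDiff ℝ 2 (uncurry ψ)
  wave : ∀ t r, 0 ≤ t → 0 ≤ r → pdt (pdt ψ) t r = pdr (pdr ψ) t r
  boundary : ∀ t, 0 ≤ t → ψ t 0 = 0

/-- Continuing `∂_v ψ (0, ·)` to negative arguments by `-∂_u ψ (0, -·)`, with `∂_u = ∂_t - ∂_r`,
is what makes `∂_v ψ = W (t + r)` and `∂_u ψ = -W (t - r)` on the whole quadrant. -/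
def HasNullData (ψ : ℝ → ℝ → ℝ) (W : ℝ → ℝ) : Prop :=
  ∀ ρ, 0 ≤ ρ → pdv ψ 0 ρ = W ρ ∧ pdt ψ 0 ρ - pdr ψ 0 ρ = -W (-ρ)

structure ProfileBound (W : ℝ → ℝ) (M : ℝ) : Prop where
  abs_le : ∀ ρ, |W ρ| ≤ M
  abs_sub_le : ∀ x y, |W x - W y| ≤ M * |x - y|
  eq_zero_of_one_lt_abs : ∀ ρ, 1 < |ρ| → W ρ = 0

lemma ProfileBound.nonneg {W : ℝ → ℝ} {M : ℝ} (hM : ProfileBound W M) : 0 ≤ M :=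
  (abs_nonneg _).trans (hM.abs_le 0)

namespace IsDirichletWave

variable {ψ : ℝ → ℝ → ℝ} {W : ℝ → ℝ} {M t r : ℝ}

lemma differentiable (hψ : IsDirichletWave ψ) : Differentiable ℝ (uncurry ψ) :=
  hψ.contDiff.differentiable two_ne_zero

lemma differentiable_fderiv (hψ : IsDirichletWave ψ) :
    Differentiable ℝ (fderiv ℝ (uncurry ψ)) :=
  (hψ.contDiff.fderiv_right (m := 1) (by norm_num)).differentiable one_ne_zero

lemma differentiable_fst (hψ : IsDirichletWave ψ) (r : ℝ) : Differentiable ℝ fun s => ψ s r :=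
  hψ.differentiable.comp (differentiable_id.prodMk (differentiable_const r))

lemma differentiable_snd (hψ : IsDirichletWave ψ) (t : ℝ) : Differentiable ℝ fun ρ => ψ t ρ :=
  hψ.differentiable.comp ((differentiable_const t).prodMk differentiable_id)

lemma fderiv_fderiv_null (hψ : IsDirichletWave ψ) {q : ℝ × ℝ} (hq₁ : 0 ≤ q.1) (hq₂ : 0 ≤ q.2) :
    fderiv ℝ (fderiv ℝ (uncurry ψ)) q (1, -1) (1, 1) = 0 ∧
      fderiv ℝ (fderiv ℝ (uncurry ψ)) q (1, 1) (1, -1) = 0 := by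
  have hw := hψ.wave q.1 q.2 hq₁ hq₂
  rw [pdt_pdt_eq_fderiv_fderiv hψ.differentiable hψ.differentiable_fderiv,
    pdr_pdr_eq_fderiv_fderiv hψ.differentiable hψ.differentiable_fderiv] at hw
  have hsymm := second_derivative_symmetric (fun y => (hψ.differentiable y).hasFDerivAt)
    (hψ.differentiable_fderiv q).hasFDerivAt ((1 : ℝ), (0 : ℝ)) ((0 : ℝ), (1 : ℝ))
  have e₁ : ((1 : ℝ), (-1 : ℝ)) = (1, 0) - (0, 1) := by simp
  have e₂ : ((1 : ℝ), (1 : ℝ)) = (1, 0) + (0, 1) := by simp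
  rw [e₁, e₂]
  simp only [map_add, map_sub, add_apply, sub_apply]
  constructor <;> linarith

lemma pdv_eq_pdv_zero (hψ : IsDirichletWave ψ) (ht : 0 ≤ t) (hr : 0 ≤ r) :
    pdv ψ t r = pdv ψ 0 (t + r) := by
  rw [pdv_eq_fderiv hψ.differentiable, pdv_eq_fderiv hψ.differentiable]
  have hd : ((t, -t) : ℝ × ℝ) = t • ((1 : ℝ), (-1 : ℝ)) := by simp
  have := fderiv_apply_add_eq hψ.differentiable_fderiv (p := (0, t + r)) (d := (t, -t))
    (v := (1, 1)) fun s hs => by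
      rw [hd, map_smul, smul_apply,
        (hψ.fderiv_fderiv_null
          (by simp only [Prod.smul_mk, smul_eq_mul, Prod.mk_add_mk]; nlinarith [hs.1])
          (by simp only [Prod.smul_mk, smul_eq_mul, Prod.mk_add_mk]; nlinarith [hs.2])).1,
        smul_zero]
  simpa using this

lemma pdt_sub_pdr_eq_sub (hψ : IsDirichletWave ψ) {s : ℝ} (hs : 0 ≤ s) (hst : s ≤ t)
    (hsr : s ≤ r) :
    pdt ψ t r - pdr ψ t r = pdt ψ (t - s) (r - s) - pdr ψ (t - s) (r - s) := by
  rw [pdt_sub_pdr_eq_fderiv hψ.differentiable, pdt_sub_pdr_eq_fderiv hψ.differentiable]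
  have hd : ((s, s) : ℝ × ℝ) = s • ((1 : ℝ), (1 : ℝ)) := by simp
  have := fderiv_apply_add_eq hψ.differentiable_fderiv (p := (t - s, r - s)) (d := (s, s))
    (v := (1, -1)) fun σ hσ => by
      rw [hd, map_smul, smul_apply,
        (hψ.fderiv_fderiv_null
          (by simp only [Prod.smul_mk, smul_eq_mul, Prod.mk_add_mk]; nlinarith [hσ.1])
          (by simp only [Prod.smul_mk, smul_eq_mul, Prod.mk_add_mk]; nlinarith [hσ.1])).2,
        smul_zero]
  simpa using this

lemma pdt_eq_zero_at_boundary (hψ : IsDirichletWave ψ) {τ : ℝ} (hτ : 0 < τ) : pdt ψ τ 0 = 0 := by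
  have : (fun s => ψ s 0) =ᶠ[𝓝 τ] fun _ => 0 := by
    filter_upwards [lt_mem_nhds hτ] with s hs using hψ.boundary s hs.le
  simp only [pdt]
  rw [this.deriv_eq, deriv_const]


lemma pdv_eq (hψ : IsDirichletWave ψ) (hW : HasNullData ψ W) (ht : 0 ≤ t) (hr : 0 ≤ r) :
    pdv ψ t r = W (t + r) := by
  rw [hψ.pdv_eq_pdv_zero ht hr, (hW _ (add_nonneg ht hr)).1]

/-- For `t > r` the outgoing ray through `(t, r)` meets `r = 0`, where `∂_t ψ = 0` turns `∂_u ψ`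
into `-∂_v ψ`. -/
lemma pdt_sub_pdr_eq (hψ : IsDirichletWave ψ) (hW : HasNullData ψ W) (ht : 0 ≤ t) (hr : 0 ≤ r) :
    pdt ψ t r - pdr ψ t r = -W (t - r) := by
  rcases le_or_gt t r with htr | hrt
  · rw [hψ.pdt_sub_pdr_eq_sub ht le_rfl htr, sub_self, (hW _ (sub_nonneg.2 htr)).2, neg_sub]
  · have hpdt := hψ.pdt_eq_zero_at_boundary (sub_pos.2 hrt)
    have hpdv := hψ.pdv_eq hW (sub_pos.2 hrt).le le_rfl
    simp only [pdv, add_zero] at hpdv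
    rw [hψ.pdt_sub_pdr_eq_sub hr hrt.le le_rfl, sub_self]
    linarith

lemma pdt_eq (hψ : IsDirichletWave ψ) (hW : HasNullData ψ W) (ht : 0 ≤ t) (hr : 0 ≤ r) :
    pdt ψ t r = (W (t + r) - W (t - r)) / 2 := by
  have hv := hψ.pdv_eq hW ht hr
  have hu := hψ.pdt_sub_pdr_eq hW ht hr
  simp only [pdv] at hv
  linarith

lemma pdr_eq (hψ : IsDirichletWave ψ) (hW : HasNullData ψ W) (ht : 0 ≤ t) (hr : 0 ≤ r) :
    pdr ψ t r = (W (t + r) + W (t - r)) / 2 := by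
  have hv := hψ.pdv_eq hW ht hr
  have hu := hψ.pdt_sub_pdr_eq hW ht hr
  simp only [pdv] at hv
  linarith

lemma abs_pdv_le (hψ : IsDirichletWave ψ) (hW : HasNullData ψ W) (hM : ProfileBound W M)
    (ht : 0 ≤ t) (hr : 0 ≤ r) : |pdv ψ t r| ≤ M := by
  rw [hψ.pdv_eq hW ht hr]
  exact hM.abs_le _

lemma pdv_eq_zero_of_one_lt_add (hψ : IsDirichletWave ψ) (hW : HasNullData ψ W)
    (hM : ProfileBound W M) (ht : 0 ≤ t) (hr : 0 ≤ r) (h : 1 < t + r) : pdv ψ t r = 0 := by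
  rw [hψ.pdv_eq hW ht hr]
  exact hM.eq_zero_of_one_lt_abs _ (h.trans_le (le_abs_self _))

lemma abs_pdt_le (hψ : IsDirichletWave ψ) (hW : HasNullData ψ W) (hM : ProfileBound W M)
    (ht : 0 ≤ t) (hr : 0 ≤ r) : |pdt ψ t r| ≤ M := by
  rw [hψ.pdt_eq hW ht hr, abs_div, abs_two]
  linarith [abs_sub (W (t + r)) (W (t - r)), hM.abs_le (t + r), hM.abs_le (t - r)]

lemma abs_pdr_le (hψ : IsDirichletWave ψ) (hW : HasNullData ψ W) (hM : ProfileBound W M)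
    (ht : 0 ≤ t) (hr : 0 ≤ r) : |pdr ψ t r| ≤ M := by
  rw [hψ.pdr_eq hW ht hr, abs_div, abs_two]
  linarith [abs_add_le (W (t + r)) (W (t - r)), hM.abs_le (t + r), hM.abs_le (t - r)]

lemma abs_pdt_le_mul (hψ : IsDirichletWave ψ) (hW : HasNullData ψ W) (hM : ProfileBound W M)
    (ht : 0 ≤ t) (hr : 0 ≤ r) : |pdt ψ t r| ≤ M * r := by
  have hL := hM.abs_sub_le (t + r) (t - r)
  rw [show t + r - (t - r) = 2 * r by ring, abs_of_nonneg (by linarith : (0 : ℝ) ≤ 2 * r)] at hL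
  rw [hψ.pdt_eq hW ht hr, abs_div, abs_two]
  linarith

lemma pdt_eq_zero_of_one_lt_abs_sub (hψ : IsDirichletWave ψ) (hW : HasNullData ψ W)
    (hM : ProfileBound W M) (ht : 0 ≤ t) (hr : 0 ≤ r) (h : 1 < |t - r|) : pdt ψ t r = 0 := by
  rw [hψ.pdt_eq hW ht hr, hM.eq_zero_of_one_lt_abs _ h,
    hM.eq_zero_of_one_lt_abs _ (h.trans_le (abs_sub_le_abs_add ht hr)), sub_zero, zero_div]

lemma pdr_eq_zero_of_one_lt_abs_sub (hψ : IsDirichletWave ψ) (hW : HasNullData ψ W)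
    (hM : ProfileBound W M) (ht : 0 ≤ t) (hr : 0 ≤ r) (h : 1 < |t - r|) : pdr ψ t r = 0 := by
  rw [hψ.pdr_eq hW ht hr, hM.eq_zero_of_one_lt_abs _ h,
    hM.eq_zero_of_one_lt_abs _ (h.trans_le (abs_sub_le_abs_add ht hr)), add_zero, zero_div]

lemma eq_zero_of_one_lt_abs_sub (hψ : IsDirichletWave ψ) (hW : HasNullData ψ W)
    (hM : ProfileBound W M) (h₀ : ∀ r, 1 < r → ψ 0 r = 0) (ht : 0 ≤ t) (hr : 0 ≤ r)
    (h : 1 < |t - r|) : ψ t r = 0 := by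
  rcases lt_abs.1 h with h | h
  · rw [eq_of_deriv_eq_zero_on_Icc (hψ.differentiable_snd t) hr fun ρ hρ =>
      hψ.pdr_eq_zero_of_one_lt_abs_sub hW hM ht hρ.1
        (by rw [abs_of_pos] <;> linarith [hρ.2]), hψ.boundary t ht]
  · rw [eq_of_deriv_eq_zero_on_Icc (hψ.differentiable_fst r) ht fun s hs =>
      hψ.pdt_eq_zero_of_one_lt_abs_sub hW hM hs.1 hr
        (by rw [abs_of_neg] <;> linarith [hs.2]), h₀ r (by linarith)]

lemma abs_le_mul (hψ : IsDirichletWave ψ) (hW : HasNullData ψ W) (hM : ProfileBound W M)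
    (ht : 0 ≤ t) (hr : 0 ≤ r) : |ψ t r| ≤ M * r := by
  simpa [hψ.boundary t ht] using abs_sub_le_of_abs_deriv_le (hψ.differentiable_snd t) hr
    fun ρ hρ => hψ.abs_pdr_le hW hM ht hρ.1

lemma abs_le_three_mul (hψ : IsDirichletWave ψ) (hW : HasNullData ψ W) (hM : ProfileBound W M)
    (h₀ : ∀ r, 1 < r → ψ 0 r = 0) (ht : 0 ≤ t) (hr : 0 ≤ r) : |ψ t r| ≤ 3 * M := by
  have hM₀ := hM.nonneg
  by_cases hcone : 1 < |t - r|
  · rw [hψ.eq_zero_of_one_lt_abs_sub hW hM h₀ ht hr hcone, abs_zero]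
    positivity
  rw [not_lt, abs_le] at hcone
  -- integrate `∂_r ψ` over `[ρ₀, r]`, an interval of length at most `3` with `ψ t ρ₀ = 0`
  set ρ₀ := max 0 (t - 2)
  have hρ₀ : ψ t ρ₀ = 0 := by
    rcases le_total t 2 with h | h
    · rw [show ρ₀ = 0 from max_eq_left (by linarith), hψ.boundary t ht]
    · rw [show ρ₀ = t - 2 from max_eq_right (by linarith)]
      exact hψ.eq_zero_of_one_lt_abs_sub hW hM h₀ ht (by linarith)
        (by rw [sub_sub_cancel, abs_two]; norm_num)
  have hmvt := abs_sub_le_of_abs_deriv_le (hψ.differentiable_snd t)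
    (max_le hr (by linarith) : ρ₀ ≤ r) fun ρ hρ =>
      hψ.abs_pdr_le hW hM ht ((le_max_left _ _).trans hρ.1)
  rw [hρ₀, sub_zero] at hmvt
  nlinarith [le_max_right 0 (t - 2)]

lemma weighted_pdt_le (hψ : IsDirichletWave ψ) (hW : HasNullData ψ W) (hM : ProfileBound W M)
    {e e' : ℝ} (he' : e' ≤ 1) (ht : 0 ≤ t) (hr : 0 ≤ r) :
    |pdt ψ t r / r| * jap ((t + r) / 2) ^ e' * jap ((t - r) / 2) ^ e ≤ 2 ^ |e| * (5 / 2 * M) :=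
  (abs_div_mul_jap_rpow_le hr he' hM.nonneg (hψ.abs_pdt_le_mul hW hM ht hr)
    (hψ.abs_pdt_le hW hM ht hr) (hψ.pdt_eq_zero_of_one_lt_abs_sub hW hM ht hr)).trans_eq
    (by ring)

lemma weighted_le (hψ : IsDirichletWave ψ) (hW : HasNullData ψ W) (hM : ProfileBound W M)
    (h₀ : ∀ r, 1 < r → ψ 0 r = 0) {e : ℝ} (ht : 0 ≤ t) (hr : 0 ≤ r) :
    |ψ t r / r| * jap ((t + r) / 2) * jap ((t - r) / 2) ^ e ≤ 2 ^ |e| * (9 / 2 * M) := by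
  have := abs_div_mul_jap_rpow_le (e := e) (e' := 1) hr le_rfl hM.nonneg (hψ.abs_le_mul hW hM ht hr)
    (hψ.abs_le_three_mul hW hM h₀ ht hr) (hψ.eq_zero_of_one_lt_abs_sub hW hM h₀ ht hr)
  rw [Real.rpow_one] at this
  linarith

lemma weighted_pdv_le (hψ : IsDirichletWave ψ) (hW : HasNullData ψ W) (hM : ProfileBound W M)
    {e : ℝ} (ht : 0 ≤ t) (hr : 0 ≤ r) : |pdv ψ t r| * jap ((t + r) / 2) ^ e ≤ 2 ^ |e| * M :=
  abs_mul_jap_rpow_le ht hr (hψ.abs_pdv_le hW hM ht hr) (hψ.pdv_eq_zero_of_one_lt_add hW hM ht hr)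

end IsDirichletWave

section Profile

variable {f₀ f₁ : ℝ → ℝ} {B : ℝ}

/-- For data `ψ(0, r) = r f₀ r`, `∂_t ψ(0, r) = r f₁ r` this is `∂_t ψ + ∂_r ψ` at `t = 0`. -/
def nullProfile (f₀ f₁ : ℝ → ℝ) (ρ : ℝ) : ℝ := f₀ ρ + ρ * (f₁ ρ + deriv f₀ ρ)

lemma abs_mul_le_of_abs_le_one {ρ x B : ℝ} (hρ : |ρ| ≤ 1) (hx : |x| ≤ B) : |ρ * x| ≤ B :=
  abs_mul ρ x ▸ (mul_le_of_le_one_left (abs_nonneg x) hρ).trans hx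

lemma nullProfile_eq_zero (h₀ : ∀ ρ, 1 < |ρ| → f₀ ρ = 0) (h₁ : ∀ ρ, 1 < |ρ| → f₁ ρ = 0) {ρ : ℝ}
    (hρ : 1 < |ρ|) : nullProfile f₀ f₁ ρ = 0 := by
  rw [nullProfile, h₀ ρ hρ, h₁ ρ hρ, deriv_eq_zero_of_lt_abs h₀ hρ]
  ring

lemma hasDerivAt_nullProfile (hf₀ : ContDiff ℝ 2 f₀) (hf₁ : Differentiable ℝ f₁) (ρ : ℝ) :
    HasDerivAt (nullProfile f₀ f₁)
      (deriv f₀ ρ + (f₁ ρ + deriv f₀ ρ) + ρ * (deriv f₁ ρ + deriv (deriv f₀) ρ)) ρ := by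
  have h₀ := (hf₀.differentiable two_ne_zero ρ).hasDerivAt
  have h₀' := (hf₀.differentiable_deriv_two ρ).hasDerivAt
  exact (h₀.add ((hasDerivAt_id' ρ).mul ((hf₁ ρ).hasDerivAt.add h₀'))).congr_deriv
    (by simp only [Pi.add_apply]; ring)

lemma profileBound_nullProfile (hf₀ : ContDiff ℝ 2 f₀) (hf₁ : ContDiff ℝ 1 f₁)
    (h₀ : ∀ ρ, 1 < |ρ| → f₀ ρ = 0) (h₁ : ∀ ρ, 1 < |ρ| → f₁ ρ = 0)
    (hB₀ : ∀ ρ, |f₀ ρ| ≤ B) (hB₀' : ∀ ρ, |deriv f₀ ρ| ≤ B) (hB₀'' : ∀ ρ, |deriv (deriv f₀) ρ| ≤ B)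
    (hB₁ : ∀ ρ, |f₁ ρ| ≤ B) (hB₁' : ∀ ρ, |deriv f₁ ρ| ≤ B) :
    ProfileBound (nullProfile f₀ f₁) (5 * B) := by
  have hB : 0 ≤ B := (abs_nonneg _).trans (hB₀ 0)
  have hderiv := hasDerivAt_nullProfile hf₀ (hf₁.differentiable one_ne_zero)
  refine ⟨fun ρ => ?_, fun x y => ?_, fun ρ => nullProfile_eq_zero h₀ h₁⟩
  · rcases le_or_gt |ρ| 1 with hρ | hρ
    · have := abs_mul_le_of_abs_le_one hρ
        ((abs_add_le (f₁ ρ) (deriv f₀ ρ)).trans (add_le_add (hB₁ ρ) (hB₀' ρ)))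
      rw [nullProfile]
      linarith [abs_add_le (f₀ ρ) (ρ * (f₁ ρ + deriv f₀ ρ)), hB₀ ρ]
    · rw [nullProfile_eq_zero h₀ h₁ hρ, abs_zero]
      positivity
  · have hbound : ∀ ρ, ‖deriv (nullProfile f₀ f₁) ρ‖ ≤ 5 * B := fun ρ => by
      rcases le_or_gt |ρ| 1 with hρ | hρ
      · have := abs_mul_le_of_abs_le_one hρ
          ((abs_add_le (deriv f₁ ρ) (deriv (deriv f₀) ρ)).trans (add_le_add (hB₁' ρ) (hB₀'' ρ)))
        rw [(hderiv ρ).deriv, Real.norm_eq_abs]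
        linarith [abs_add_le (deriv f₀ ρ + (f₁ ρ + deriv f₀ ρ))
          (ρ * (deriv f₁ ρ + deriv (deriv f₀) ρ)), abs_add_le (deriv f₀ ρ) (f₁ ρ + deriv f₀ ρ),
          abs_add_le (f₁ ρ) (deriv f₀ ρ), hB₀' ρ, hB₁ ρ]
      · rw [deriv_eq_zero_of_lt_abs (fun _ => nullProfile_eq_zero h₀ h₁) hρ, norm_zero]
        positivity
    exact convex_univ.norm_image_sub_le_of_norm_deriv_le (fun z _ => (hderiv z).differentiableAt)
      (fun z _ => hbound z) (mem_univ y) (mem_univ x)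

lemma hasNullData_nullProfile {ψ : ℝ → ℝ → ℝ} (hψ : IsDirichletWave ψ)
    (hf₀ : Differentiable ℝ f₀) (hf₀e : ∀ ρ, f₀ (-ρ) = f₀ ρ) (hf₁e : ∀ ρ, f₁ (-ρ) = f₁ ρ)
    (hd₀ : ∀ r, 0 ≤ r → ψ 0 r = r * f₀ r) (hd₁ : ∀ r, 0 ≤ r → pdt ψ 0 r = r * f₁ r) :
    HasNullData ψ (nullProfile f₀ f₁) := by
  intro ρ hρ
  have hF : HasDerivAt (fun r => r * f₀ r) (1 * f₀ ρ + ρ * deriv f₀ ρ) ρ :=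
    (hasDerivAt_id' ρ).mul (hf₀ ρ).hasDerivAt
  have hpdr : pdr ψ 0 ρ = f₀ ρ + ρ * deriv f₀ ρ := by
    rw [pdr, deriv_eq_of_eqOn_Ici ((hψ.differentiable_snd 0) ρ) hF.differentiableAt
      fun r hr => hd₀ r (hρ.trans hr), hF.deriv, one_mul]
  have hodd : deriv f₀ (-ρ) = -deriv f₀ ρ := by
    have := deriv_comp_neg f₀ ρ
    rw [show (fun x => f₀ (-x)) = f₀ from funext hf₀e] at this
    linarith
  constructor
  · rw [pdv, hd₁ ρ hρ, hpdr, nullProfile]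
    ring
  · rw [hd₁ ρ hρ, hpdr, nullProfile, hf₀e, hf₁e, hodd]
    ring

end Profile

section Radial

local notation "e₁" => EuclideanSpace.single (0 : Fin 3) (1 : ℝ)

variable {φ : E3 → ℝ}

lemma radRep_neg (hφ : Radial φ) (ρ : ℝ) : radRep φ (-ρ) = radRep φ ρ :=
  hφ _ _ (by rw [neg_smul, norm_neg])

lemma radRep_eq_zero (hφ : ∀ x : E3, 1 ≤ ‖x‖ → φ x = 0) {ρ : ℝ} (hρ : 1 ≤ |ρ|) :
    radRep φ ρ = 0 :=
  hφ _ (by simpa [norm_smul] using hρ)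

lemma radRep_contDiff {n : WithTop ℕ∞} (hφ : ContDiff ℝ n φ) : ContDiff ℝ n (radRep φ) :=
  hφ.comp (contDiff_id.smul contDiff_const)

lemma hasDerivAt_smul_single (ρ : ℝ) : HasDerivAt (fun ρ : ℝ => ρ • e₁) e₁ ρ := by
  simpa using (hasDerivAt_id' ρ).smul_const e₁

lemma deriv_radRep (hφ : Differentiable ℝ φ) :
    deriv (radRep φ) = fun ρ => fderiv ℝ φ (ρ • e₁) e₁ :=
  funext fun ρ => ((hφ _).hasFDerivAt.comp_hasDerivAt ρ (hasDerivAt_smul_single ρ)).deriv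

lemma deriv_deriv_radRep (hφ : ContDiff ℝ 2 φ) (ρ : ℝ) :
    deriv (deriv (radRep φ)) ρ = fderiv ℝ (fderiv ℝ φ) (ρ • e₁) e₁ e₁ := by
  rw [deriv_radRep (hφ.differentiable two_ne_zero)]
  exact (hasDerivAt_fderiv_apply_comp
    ((hφ.fderiv_right (m := 1) (by norm_num)).differentiable one_ne_zero _)
    (hasDerivAt_smul_single ρ) e₁).deriv

lemma norm_apply_single_le {F : Type*} [NormedAddCommGroup F] [NormedSpace ℝ F]
    (L : E3 →L[ℝ] F) : ‖L e₁‖ ≤ ‖L‖ := by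
  simpa using L.le_opNorm e₁

lemma hasCompactSupport_of_eq_zero_outside_ball (hφ : ∀ x : E3, 1 ≤ ‖x‖ → φ x = 0) :
    HasCompactSupport φ :=
  HasCompactSupport.intro (isCompact_closedBall 0 1) fun x hx => hφ x <| by
    rw [Metric.mem_closedBall, dist_zero_right, not_le] at hx
    exact hx.le

lemma norm_le_iSup_norm {X G : Type*} [TopologicalSpace X] [NormedAddCommGroup G] {f : X → G}
    (hf : Continuous f) (hs : HasCompactSupport f) (x : X) : ‖f x‖ ≤ ⨆ y, ‖f y‖ :=
  le_ciSup (hf.norm.bddAbove_range_of_hasCompactSupport hs.norm) x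

lemma W1inf_nonneg (φ : E3 → ℝ) : 0 ≤ W1inf φ :=
  add_nonneg (Real.iSup_nonneg fun _ => abs_nonneg _) (Real.iSup_nonneg fun _ => norm_nonneg _)

lemma W1inf_le_W2inf (φ : E3 → ℝ) : W1inf φ ≤ W2inf φ :=
  le_add_of_nonneg_right (Real.iSup_nonneg fun x => norm_nonneg (fderiv ℝ (fderiv ℝ φ) x))

lemma abs_radRep_le (hφ : ContDiff ℝ 1 φ) (hs : HasCompactSupport φ) (ρ : ℝ) :
    |radRep φ ρ| ≤ W1inf φ :=
  (norm_le_iSup_norm hφ.continuous hs _).trans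
    (le_add_of_nonneg_right (Real.iSup_nonneg fun _ => norm_nonneg _))

lemma abs_deriv_radRep_le (hφ : ContDiff ℝ 1 φ) (hs : HasCompactSupport φ) (ρ : ℝ) :
    |deriv (radRep φ) ρ| ≤ W1inf φ := by
  rw [deriv_radRep (hφ.differentiable one_ne_zero)]
  exact (norm_apply_single_le _).trans
    ((norm_le_iSup_norm (hφ.continuous_fderiv one_ne_zero) (hs.fderiv ℝ) _).trans
      (le_add_of_nonneg_left (Real.iSup_nonneg fun _ => abs_nonneg _)))

lemma abs_deriv_deriv_radRep_le (hφ : ContDiff ℝ 2 φ) (hs : HasCompactSupport φ) (ρ : ℝ) :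
    |deriv (deriv (radRep φ)) ρ| ≤ W2inf φ := by
  rw [deriv_deriv_radRep hφ]
  exact ((norm_apply_single_le _).trans (norm_apply_single_le _)).trans
    ((norm_le_iSup_norm ((hφ.fderiv_right (m := 1) (by norm_num)).continuous_fderiv one_ne_zero)
      ((hs.fderiv ℝ).fderiv ℝ) _).trans (le_add_of_nonneg_left (W1inf_nonneg φ)))

end Radial

section Data

variable {φ₀ φ₁ : E3 → ℝ}

lemma profileBound_radial (h₀ : ContDiff ℝ 2 φ₀) (h₁ : ContDiff ℝ 1 φ₁)
    (hs₀ : ∀ x : E3, 1 ≤ ‖x‖ → φ₀ x = 0) (hs₁ : ∀ x : E3, 1 ≤ ‖x‖ → φ₁ x = 0) :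
    ProfileBound (nullProfile (radRep φ₀) (radRep φ₁)) (5 * (W2inf φ₀ + W1inf φ₁)) := by
  have c₀ := hasCompactSupport_of_eq_zero_outside_ball hs₀
  have c₁ := hasCompactSupport_of_eq_zero_outside_ball hs₁
  have h₀' : ContDiff ℝ 1 φ₀ := h₀.of_le one_le_two
  have hle₀ : W1inf φ₀ ≤ W2inf φ₀ + W1inf φ₁ :=
    (W1inf_le_W2inf φ₀).trans (le_add_of_nonneg_right (W1inf_nonneg φ₁))
  have hle₀' : W2inf φ₀ ≤ W2inf φ₀ + W1inf φ₁ := le_add_of_nonneg_right (W1inf_nonneg φ₁)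
  have hle₁ : W1inf φ₁ ≤ W2inf φ₀ + W1inf φ₁ :=
    le_add_of_nonneg_left ((W1inf_nonneg φ₀).trans (W1inf_le_W2inf φ₀))
  exact profileBound_nullProfile (radRep_contDiff h₀) (radRep_contDiff h₁)
    (fun ρ hρ => radRep_eq_zero hs₀ hρ.le) (fun ρ hρ => radRep_eq_zero hs₁ hρ.le)
    (fun ρ => (abs_radRep_le h₀' c₀ ρ).trans hle₀)
    (fun ρ => (abs_deriv_radRep_le h₀' c₀ ρ).trans hle₀)
    (fun ρ => (abs_deriv_deriv_radRep_le h₀ c₀ ρ).trans hle₀')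
    (fun ρ => (abs_radRep_le h₁ c₁ ρ).trans hle₁)
    (fun ρ => (abs_deriv_radRep_le h₁ c₁ ρ).trans hle₁)

lemma IsDirichletWave.exists_profile {ψ : ℝ → ℝ → ℝ} (hψ : IsDirichletWave ψ)
    (h₀ : ContDiff ℝ 2 φ₀) (h₁ : ContDiff ℝ 1 φ₁) (hr₀ : Radial φ₀) (hr₁ : Radial φ₁)
    (hs₀ : ∀ x : E3, 1 ≤ ‖x‖ → φ₀ x = 0) (hs₁ : ∀ x : E3, 1 ≤ ‖x‖ → φ₁ x = 0)
    (hd₀ : ∀ r, 0 ≤ r → ψ 0 r = r * radRep φ₀ r) (hd₁ : ∀ r, 0 ≤ r → pdt ψ 0 r = r * radRep φ₁ r) :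
    ∃ W, HasNullData ψ W ∧ ProfileBound W (5 * (W2inf φ₀ + W1inf φ₁)) :=
  ⟨_, hasNullData_nullProfile hψ ((radRep_contDiff h₀).differentiable two_ne_zero)
    (radRep_neg hr₀) (radRep_neg hr₁) hd₀ hd₁, profileBound_radial h₀ h₁ hs₀ hs₁⟩

end Data

lemma Xnorm_le {a s1 s2 c₁ c₂ c₃ : ℝ} {ψ1 ψ2 : ℝ → ℝ → ℝ}
    (h₁ : ∀ t r : ℝ, 0 ≤ t → 0 ≤ r →
      |pdt ψ1 t r / r| * jap ((t + r) / 2) ^ (1 + a) * jap ((t - r) / 2) ^ (s1 + 1 - a) ≤ c₁)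
    (h₂ : ∀ t r : ℝ, 0 ≤ t → 0 ≤ r →
      |ψ2 t r / r| * jap ((t + r) / 2) * jap ((t - r) / 2) ^ s2 ≤ c₂)
    (h₃ : ∀ t r : ℝ, 0 ≤ t → 0 ≤ r → |pdv ψ2 t r| * jap ((t + r) / 2) ^ (s2 + 1) ≤ c₃) :
    Xnorm a s1 s2 ψ1 ψ2 ≤ c₁ + c₂ + c₃ := by
  have : Nonempty {p : ℝ × ℝ // 0 ≤ p.1 ∧ 0 ≤ p.2} := ⟨⟨(0, 0), le_rfl, le_rfl⟩⟩
  exact add_le_add (add_le_add (ciSup_le fun p => h₁ _ _ p.2.1 p.2.2)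
    (ciSup_le fun p => h₂ _ _ p.2.1 p.2.2)) (ciSup_le fun p => h₃ _ _ p.2.1 p.2.2)

theorem stmt_10_general (q1 a s1 s2 : ℝ) (hq1' : q1 < 2) (ha : a = q1 - 2) :
    ∃ C : ℝ, ∀ φ10 φ20 : E3 → ℝ, ∀ φ11 φ21 : E3 → ℝ, ∀ ψ1 ψ2 : ℝ → ℝ → ℝ,
      ContDiff ℝ 2 φ10 → ContDiff ℝ 2 φ20 → ContDiff ℝ 1 φ11 → ContDiff ℝ 1 φ21 →
      Radial φ10 → Radial φ20 → Radial φ11 → Radial φ21 →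
      (∀ x : E3, 1 ≤ ‖x‖ → φ10 x = 0 ∧ φ20 x = 0 ∧ φ11 x = 0 ∧ φ21 x = 0) →
      ContDiff ℝ 2 (fun p : ℝ × ℝ => ψ1 p.1 p.2) →
      ContDiff ℝ 2 (fun p : ℝ × ℝ => ψ2 p.1 p.2) →
      (∀ t r : ℝ, 0 ≤ t → 0 ≤ r → pdt (pdt ψ1) t r = pdr (pdr ψ1) t r) →
      (∀ t r : ℝ, 0 ≤ t → 0 ≤ r → pdt (pdt ψ2) t r = pdr (pdr ψ2) t r) →
      (∀ t : ℝ, 0 ≤ t → ψ1 t 0 = 0 ∧ ψ2 t 0 = 0) →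
      (∀ r : ℝ, 0 ≤ r → ψ1 0 r = r * radRep φ10 r ∧ ψ2 0 r = r * radRep φ20 r) →
      (∀ r : ℝ, 0 ≤ r → pdt ψ1 0 r = r * radRep φ11 r ∧ pdt ψ2 0 r = r * radRep φ21 r) →
      Xnorm a s1 s2 ψ1 ψ2 ≤ C * (W2inf φ10 + W2inf φ20 + W1inf φ11 + W1inf φ21) := by
  refine ⟨2 ^ |s1 + 1 - a| * (25 / 2) + 2 ^ |s2| * (45 / 2) + 2 ^ |s2 + 1| * 5, ?_⟩
  intro φ10 φ20 φ11 φ21 ψ1 ψ2 h10 h20 h11 h21 hr10 hr20 hr11 hr21 hsupp hψ1 hψ2 hw1 hw2 hbd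
    hdat0 hdat1
  have hsol1 : IsDirichletWave ψ1 := ⟨hψ1, hw1, fun t ht => (hbd t ht).1⟩
  have hsol2 : IsDirichletWave ψ2 := ⟨hψ2, hw2, fun t ht => (hbd t ht).2⟩
  obtain ⟨W1, hW1, hM1⟩ := hsol1.exists_profile h10 h11 hr10 hr11 (fun x hx => (hsupp x hx).1)
    (fun x hx => (hsupp x hx).2.2.1) (fun r hr => (hdat0 r hr).1) (fun r hr => (hdat1 r hr).1)
  obtain ⟨W2, hW2, hM2⟩ := hsol2.exists_profile h20 h21 hr20 hr21 (fun x hx => (hsupp x hx).2.1)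
    (fun x hx => (hsupp x hx).2.2.2) (fun r hr => (hdat0 r hr).2) (fun r hr => (hdat1 r hr).2)
  have hψ2₀ : ∀ r, 1 < r → ψ2 0 r = 0 := fun r hr => by
    rw [(hdat0 r (by linarith)).2, radRep_eq_zero (fun x hx => (hsupp x hx).2.1)
      (by rw [abs_of_pos (by linarith)]; exact hr.le), mul_zero]
  have p₁ : (0 : ℝ) ≤ 2 ^ |s1 + 1 - a| := by positivity
  have p₂ : (0 : ℝ) ≤ 2 ^ |s2| := by positivity
  have p₃ : (0 : ℝ) ≤ 2 ^ |s2 + 1| := by positivity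
  calc Xnorm a s1 s2 ψ1 ψ2
      ≤ 2 ^ |s1 + 1 - a| * (5 / 2 * (5 * (W2inf φ10 + W1inf φ11)))
        + 2 ^ |s2| * (9 / 2 * (5 * (W2inf φ20 + W1inf φ21)))
        + 2 ^ |s2 + 1| * (5 * (W2inf φ20 + W1inf φ21)) :=
      Xnorm_le (fun t r ht hr => hsol1.weighted_pdt_le hW1 hM1 (by linarith) ht hr)
        (fun t r ht hr => hsol2.weighted_le hW2 hM2 hψ2₀ ht hr)
        (fun t r ht hr => hsol2.weighted_pdv_le hW2 hM2 ht hr)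
    _ ≤ _ := by
      nlinarith [mul_nonneg p₁ hM2.nonneg, mul_nonneg p₂ hM1.nonneg, mul_nonneg p₃ hM1.nonneg]

/-- Linear estimate for the free radial wave evolution: if `ψ_i` solve the
1+1-dimensional wave equation with boundary condition `ψ_i(t,0) = 0` and data
`ψ_i(0,r) = r φ_i^{(0)}(r)`, `∂_tψ_i(0,r) = r φ_i^{(1)}(r)` coming from radial data
supported in the unit ball, then the `X`-norm of `(ψ₁, ψ₂)` is controlled by the
`W^{2,∞} × W^{1,∞}` norms of the data, with a constant depending only on `q₁, q₂`. -/
theorem stmt_10 (q1 q2 a s1 s2 : ℝ) (hq1 : 1 < q1) (hq1' : q1 < 2) (hq2 : 2 < q2)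
    (hcrit : 1 < q1 * q2 * ((q2 - 2) + q2 * (q1 - 2)))
    (ha : a = q1 - 2) (hs2 : s2 = (q2 - 2) + q2 * (q1 - 2))
    (hs1 : s1 = a + min 0 (q1 * s2 - 1)) :
    ∃ C : ℝ, ∀ φ10 φ20 : E3 → ℝ, ∀ φ11 φ21 : E3 → ℝ, ∀ ψ1 ψ2 : ℝ → ℝ → ℝ,
      ContDiff ℝ 2 φ10 → ContDiff ℝ 2 φ20 → ContDiff ℝ 1 φ11 → ContDiff ℝ 1 φ21 →
      Radial φ10 → Radial φ20 → Radial φ11 → Radial φ21 →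
      (∀ x : E3, 1 ≤ ‖x‖ → φ10 x = 0 ∧ φ20 x = 0 ∧ φ11 x = 0 ∧ φ21 x = 0) →
      ContDiff ℝ 2 (fun p : ℝ × ℝ => ψ1 p.1 p.2) →
      ContDiff ℝ 2 (fun p : ℝ × ℝ => ψ2 p.1 p.2) →
      (∀ t r : ℝ, 0 ≤ t → 0 ≤ r → pdt (pdt ψ1) t r = pdr (pdr ψ1) t r) →
      (∀ t r : ℝ, 0 ≤ t → 0 ≤ r → pdt (pdt ψ2) t r = pdr (pdr ψ2) t r) →
      (∀ t : ℝ, 0 ≤ t → ψ1 t 0 = 0 ∧ ψ2 t 0 = 0) →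
      (∀ r : ℝ, 0 ≤ r → ψ1 0 r = r * radRep φ10 r ∧ ψ2 0 r = r * radRep φ20 r) →
      (∀ r : ℝ, 0 ≤ r → pdt ψ1 0 r = r * radRep φ11 r ∧ pdt ψ2 0 r = r * radRep φ21 r) →
      Xnorm a s1 s2 ψ1 ψ2 ≤ C * (W2inf φ10 + W2inf φ20 + W1inf φ11 + W1inf φ21) :=
  stmt_10_general q1 a s1 s2 hq1' ha

end
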